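/- arXiv:1207.5122 — 3 statements merged into one kernel-verified Lean document; each statement's English description precedes it below -/
import Mathlib

section
/- If G = G_1 ∪ G_2 where G_1 and G_2 are graphs with V(G_1) ∩ V(G_2) = {v} a single vertex, and both G_1 and G_2 have an SOCDC, then G also has an SOCDC. -/
open SimpleGraph

/-- The list of arcs of a cyclically-read list of vertices:
`[(l₀,l₁), (l₁,l₂), …, (lₙ₋₁,l₀)]`. -/
def cycleArcs {V : Type*} (l : List V) : List (V × V) := l.zip (l.rotate 1)

/-- `l` represents a directed cycle of the symmetric orientation of `G`:
a cyclic sequence of at least three pairwise distinct vertices with consecutive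
vertices adjacent (cyclically). -/
def IsDirCycle {V : Type*} (G : SimpleGraph V) (l : List V) : Prop :=
  3 ≤ l.length ∧ l.Nodup ∧ ∀ p ∈ cycleArcs l, G.Adj p.1 p.2

/-- An oriented cycle double cover of `G` : a collection of directed cycles of the
symmetric orientation of `G` such that each arc `(u,v)` (with `u ~ v` in `G`) lies
in exactly one of the cycles. -/
def IsOCDC {V : Type*} (G : SimpleGraph V) (C : Finset (List V)) : Prop :=
  (∀ l ∈ C, IsDirCycle G l) ∧
    ∀ u v : V, G.Adj u v → ∃! l : List V, l ∈ C ∧ (u, v) ∈ cycleArcs l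

/-- `G` (a graph with vertex set of size `n`) has a small oriented cycle double cover:
an OCDC with at most `n - 1` directed cycles. -/
def HasSOCDC {V : Type*} (G : SimpleGraph V) : Prop :=
  ∃ C : Finset (List V), IsOCDC G C ∧ C.card ≤ Nat.card V - 1

/-- `l` represents a directed path of the symmetric orientation of `G`. -/
def IsDirPath {V : Type*} (G : SimpleGraph V) (l : List V) : Prop :=
  l ≠ [] ∧ l.Nodup ∧ l.Chain' G.Adj

/-- An oriented perfect path double cover of `G`: a collection of directed paths of the
symmetric orientation of `G` such that each arc lies in exactly one path, and every
vertex occurs exactly once as the start and exactly once as the end of a path. -/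
def IsOPPDC {V : Type*} (G : SimpleGraph V) (P : Finset (List V)) : Prop :=
  (∀ l ∈ P, IsDirPath G l) ∧
    (∀ u v : V, G.Adj u v → ∃! l : List V, l ∈ P ∧ (u, v) ∈ l.zip l.tail) ∧
    (∀ v : V, ∃! l : List V, l ∈ P ∧ l.head? = some v) ∧
    (∀ v : V, ∃! l : List V, l ∈ P ∧ l.getLast? = some v)

/-- If `G = G₁ ∪ G₂` where the vertex sets of `G₁` and `G₂` intersect in the single
vertex `v`, and both `G₁` (a graph on vertex set `A`) and `G₂` (a graph on vertex set
`B`) have an SOCDC, then `G` has an SOCDC. -/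
theorem hasSOCDC_of_union_inter_singleton {V : Type} [Finite V]
    (G₁ G₂ : SimpleGraph V) (A B : Set V) (v : V)
    (hA : ∀ x y, G₁.Adj x y → x ∈ A ∧ y ∈ A)
    (hB : ∀ x y, G₂.Adj x y → x ∈ B ∧ y ∈ B)
    (hU : A ∪ B = Set.univ) (hI : A ∩ B = {v})
    (h₁ : ∃ C : Finset (List V), IsOCDC G₁ C ∧ C.card ≤ A.ncard - 1)
    (h₂ : ∃ C : Finset (List V), IsOCDC G₂ C ∧ C.card ≤ B.ncard - 1) :
    HasSOCDC (G₁ ⊔ G₂) := by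
  classical
  obtain ⟨C₁, ⟨hc₁, hu₁⟩, hcard₁⟩ := h₁
  obtain ⟨C₂, ⟨hc₂, hu₂⟩, hcard₂⟩ := h₂
  have hnot : ∀ u w, G₁.Adj u w → G₂.Adj u w → False := by
    intro u w h1 h2
    have hu : u ∈ A ∩ B := ⟨(hA u w h1).1, (hB u w h2).1⟩
    have hw : w ∈ A ∩ B := ⟨(hA u w h1).2, (hB u w h2).2⟩
    rw [hI] at hu hw
    exact h1.ne (hu.trans hw.symm)
  refine ⟨C₁ ∪ C₂, ⟨?_, ?_⟩, ?_⟩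
  · intro l hl
    rcases Finset.mem_union.1 hl with h | h
    · obtain ⟨h1, h2, h3⟩ := hc₁ l h
      exact ⟨h1, h2, fun p hp => Or.inl (h3 p hp)⟩
    · obtain ⟨h1, h2, h3⟩ := hc₂ l h
      exact ⟨h1, h2, fun p hp => Or.inr (h3 p hp)⟩
  · intro u w huw
    rcases huw with h | h
    · obtain ⟨l, ⟨hl, hmem⟩, huniq⟩ := hu₁ u w h
      refine ⟨l, ⟨Finset.mem_union_left _ hl, hmem⟩, ?_⟩
      rintro l' ⟨hl', hmem'⟩
      rcases Finset.mem_union.1 hl' with h' | h'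
      · exact huniq l' ⟨h', hmem'⟩
      · exact absurd ((hc₂ l' h').2.2 _ hmem') (fun h2 => hnot u w h h2)
    · obtain ⟨l, ⟨hl, hmem⟩, huniq⟩ := hu₂ u w h
      refine ⟨l, ⟨Finset.mem_union_right _ hl, hmem⟩, ?_⟩
      rintro l' ⟨hl', hmem'⟩
      rcases Finset.mem_union.1 hl' with h' | h'
      · exact absurd ((hc₁ l' h').2.2 _ hmem') (fun h1 => hnot u w h1 h)
      · exact huniq l' ⟨h', hmem'⟩
  · have hv : v ∈ A ∩ B := by rw [hI]; exact Set.mem_singleton v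
    have hAfin : A.Finite := Set.toFinite A
    have hBfin : B.Finite := Set.toFinite B
    have hkey : (A ∪ B).ncard + (A ∩ B).ncard = A.ncard + B.ncard :=
      Set.ncard_union_add_ncard_inter A B hAfin hBfin
    rw [hU, hI, Set.ncard_univ, Set.ncard_singleton] at hkey
    have hApos : 1 ≤ A.ncard := (Set.ncard_pos hAfin).2 ⟨v, hv.1⟩
    have hBpos : 1 ≤ B.ncard := (Set.ncard_pos hBfin).2 ⟨v, hv.2⟩
    have := Finset.card_union_le C₁ C₂
    omega
end

section
/- For every integer r ≥ 1, there exists a bridgeless simple graph G of order n = 3r + 1 such that every OCDC of G consists of exactly 4r = (n − 1) + r directed cycles. Concretely, the graph obtained from a path v_1, …, v_{r+1} by replacing each edge v_i v_{i+1} by a copy of K_4 on vertex set {v_i, v_i', v_{i+1}, v_{i+1}'} has this property. -/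
open SimpleGraph

/-- Membership of a vertex in the `i`-th `K₄`-block of the chain of `K₄`'s: the block
contains the path vertices `vᵢ, vᵢ₊₁` (the `Sum.inl` vertices `i.castSucc`, `i.succ`)
and its two private vertices (the `Sum.inr` vertices with first coordinate `i`). -/
def inBlockK4 (r : ℕ) (i : Fin r) : Fin (r + 1) ⊕ Fin r × Fin 2 → Prop
  | Sum.inl j => j = i.castSucc ∨ j = i.succ
  | Sum.inr p => p.1 = i

/-- The graph obtained from a path `v₁, …, v_{r+1}` by replacing each edge `vᵢvᵢ₊₁` by a
copy of `K₄` on `vᵢ, vᵢ₊₁` and two new private vertices: two distinct vertices are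
adjacent iff they lie in a common `K₄`-block. -/
def chainOfK4 (r : ℕ) : SimpleGraph (Fin (r + 1) ⊕ Fin r × Fin 2) where
  Adj x y := x ≠ y ∧ ∃ i : Fin r, inBlockK4 r i x ∧ inBlockK4 r i y
  symm := by
    constructor
    rintro x y ⟨hxy, i, hx, hy⟩
    exact ⟨hxy.symm, i, hy, hx⟩
  loopless := by
    constructor
    rintro x ⟨hxx, -⟩
    exact hxx rfl

/-!
Each path vertex `vⱼ` with `0 < j < r` separates the chain, and a directed cycle with one vertex
removed is still a directed path; hence every directed cycle lies in a single `K₄`-block. An OCDC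
therefore splits into OCDCs of the `r` blocks, and it remains to see that every OCDC of `K₄` has
exactly four cycles. Its cycles have length `3` or `4` and total length `12`, so there are three or
four of them; three would be pairwise arc-disjoint directed Hamiltonian cycles, which do not exist
because any two arc-disjoint ones are reverses of each other. Every edge lies in a triangle, so the
graph is bridgeless.
-/

section DirCycles

variable {V W : Type*}

lemma length_cycleArcs (l : List V) : (cycleArcs l).length = l.length := by
  simp [cycleArcs]

lemma mem_of_mem_cycleArcs {l : List V} {u v : V} (h : (u, v) ∈ cycleArcs l) : u ∈ l ∧ v ∈ l :=
  have h' := List.of_mem_zip h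
  ⟨h'.1, List.mem_rotate.mp h'.2⟩

lemma List.Nodup.cycleArcs {l : List V} (h : l.Nodup) : (cycleArcs l).Nodup :=
  List.Nodup.of_map Prod.fst (by rwa [_root_.cycleArcs, List.map_fst_zip (by simp)])

lemma cycleArcs_map (f : V → W) (l : List V) :
    cycleArcs (l.map f) = (cycleArcs l).map (Prod.map f f) := by
  rw [cycleArcs, cycleArcs, ← List.map_rotate, List.zip_map]

lemma mem_cycleArcs_map_iff {f : V → W} (hf : f.Injective) {l : List V} {u v : V} :
    (f u, f v) ∈ cycleArcs (l.map f) ↔ (u, v) ∈ cycleArcs l := by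
  rw [cycleArcs_map, ← Prod.map_apply, List.mem_map_of_injective (hf.prodMap hf)]

lemma cycleArcs_rotate (l : List V) (n : ℕ) :
    cycleArcs (l.rotate n) = (cycleArcs l).rotate n := by
  rw [cycleArcs, cycleArcs, List.zip_eq_zipWith, List.zip_eq_zipWith,
    List.zipWith_rotate_distrib _ _ _ _ (by simp),
    List.rotate_rotate, List.rotate_rotate, add_comm]

lemma isChain_of_forall_mem_cycleArcs {R : V → V → Prop} {x : V} {p : List V}
    (h : ∀ q ∈ cycleArcs (x :: p), R q.1 q.2) : (x :: p).IsChain R := by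
  suffices ∀ x y : V, (∀ q ∈ (x :: p).zip (p ++ [y]), R q.1 q.2) → (x :: p).IsChain R from
    this x x (by simpa [cycleArcs] using h)
  clear h
  induction p with
  | nil => simp
  | cons z p ih =>
    intro x y h
    simp only [List.cons_append, List.zip_cons_cons, List.mem_cons, forall_eq_or_imp] at h
    exact List.isChain_cons_cons.2 ⟨h.1, ih z y h.2⟩

namespace IsDirCycle

variable {G : SimpleGraph V} {l : List V}

lemma rotate (hl : IsDirCycle G l) (n : ℕ) : IsDirCycle G (l.rotate n) :=
  ⟨by simpa using hl.1, List.nodup_rotate.mpr hl.2.1, fun p hp =>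
    hl.2.2 p (List.mem_rotate.mp (cycleArcs_rotate l n ▸ hp))⟩

lemma exists_mem_cycleArcs (hl : IsDirCycle G l) : ∃ p, p ∈ cycleArcs l :=
  List.exists_mem_of_length_pos (by rw [length_cycleArcs]; have := hl.1; omega)

lemma exists_isChain_avoiding (hl : IsDirCycle G l) (c : V) :
    ∃ p : List V, p.IsChain G.Adj ∧ c ∉ p ∧ ∀ v ∈ l, v ≠ c → v ∈ p := by
  by_cases hc : c ∈ l
  · obtain ⟨s, t, rfl⟩ := List.append_of_mem hc
    have hrot := hl.rotate s.length
    rw [List.rotate_append_length_eq, List.cons_append] at hrot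
    refine ⟨t ++ s, (isChain_of_forall_mem_cycleArcs hrot.2.2).tail,
      (List.nodup_cons.mp hrot.2.1).1, fun v hv hvc => ?_⟩
    simp only [List.mem_append, List.mem_cons] at hv ⊢
    tauto
  · obtain ⟨x, p, rfl⟩ := List.exists_cons_of_length_pos (l := l) (by have := hl.1; omega)
    exact ⟨x :: p, isChain_of_forall_mem_cycleArcs hl.2.2, hc, fun v hv _ => hv⟩

lemma iff_of_ne_of_ne (hl : IsDirCycle G l) {c : V} {P : V → Prop}
    (hP : ∀ a b, G.Adj a b → a ≠ c → b ≠ c → (P a ↔ P b)) {u w : V} (hu : u ∈ l) (hw : w ∈ l)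
    (huc : u ≠ c) (hwc : w ≠ c) : P u ↔ P w := by
  obtain ⟨p, hp, hcp, hlp⟩ := hl.exists_isChain_avoiding c
  have hne : p ≠ [] := List.ne_nil_of_mem (hlp u hu huc)
  have hconst : ∀ v ∈ p, P v ↔ P (p.head hne) :=
    (hp.imp_of_mem_imp fun a b ha hb hab => hP a b hab (ne_of_mem_of_not_mem ha hcp)
      (ne_of_mem_of_not_mem hb hcp)).induction _ p (fun _ _ hab ha => hab.symm.trans ha)
      fun _ => Iff.rfl
  exact (hconst u (hlp u hu huc)).trans (hconst w (hlp w hw hwc)).symm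

end IsDirCycle

end DirCycles

section OCDC

open Finset

variable {V W : Type*} {G : SimpleGraph V} {H : SimpleGraph W}

lemma isDirCycle_map_iff (f : H ↪g G) {l : List W} : IsDirCycle G (l.map f) ↔ IsDirCycle H l := by
  simp only [IsDirCycle, List.length_map, List.nodup_map_iff f.injective, cycleArcs_map,
    List.forall_mem_map, Prod.map, f.map_adj_iff]

namespace IsOCDC

variable {C : Finset (List V)}

lemma disjoint_cycleArcs (hC : IsOCDC G C) {l₁ l₂ : List V} (h₁ : l₁ ∈ C) (h₂ : l₂ ∈ C)
    (hne : l₁ ≠ l₂) : (cycleArcs l₁).Disjoint (cycleArcs l₂) := fun p hp₁ hp₂ =>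
  hne ((hC.2 _ _ ((hC.1 l₁ h₁).2.2 p hp₁)).unique ⟨h₁, hp₁⟩ ⟨h₂, hp₂⟩)

lemma sum_length [Fintype V] [DecidableRel G.Adj] (hC : IsOCDC G C) :
    ∑ l ∈ C, l.length = Fintype.card G.Dart := by
  classical
  have hdisj : (C : Set (List V)).PairwiseDisjoint fun l => (cycleArcs l).toFinset :=
    fun l₁ h₁ l₂ h₂ hne =>
      List.disjoint_toFinset_iff_disjoint.mpr (hC.disjoint_cycleArcs h₁ h₂ hne)
  have hunion : C.biUnion (fun l => (cycleArcs l).toFinset) =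
      (univ : Finset G.Dart).map ⟨Dart.toProd, Dart.toProd_injective⟩ := by
    ext ⟨u, v⟩
    simp only [mem_biUnion, List.mem_toFinset, mem_map, mem_univ, true_and,
      Function.Embedding.coeFn_mk]
    constructor
    · rintro ⟨l, hl, huv⟩
      exact ⟨⟨(u, v), (hC.1 l hl).2.2 _ huv⟩, rfl⟩
    · rintro ⟨⟨⟨u, v⟩, huv⟩, ⟨⟩⟩
      obtain ⟨l, ⟨hl, h⟩, -⟩ := hC.2 _ _ huv
      exact ⟨l, hl, h⟩
  calc ∑ l ∈ C, l.length = ∑ l ∈ C, (cycleArcs l).toFinset.card :=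
        sum_congr rfl fun l hl => by
          rw [List.toFinset_card_of_nodup (hC.1 l hl).2.1.cycleArcs, length_cycleArcs]
    _ = Fintype.card G.Dart := by rw [← card_biUnion hdisj, hunion, card_map, card_univ]

lemma exists_comap [Nonempty W] (hC : IsOCDC G C) (f : H ↪g G) {D : Finset (List V)}
    (hDC : D ⊆ C) (hD : ∀ l ∈ D, ∀ v ∈ l, v ∈ Set.range f)
    (hcov : ∀ l ∈ C, ∀ a b, (f a, f b) ∈ cycleArcs l → l ∈ D) :
    ∃ D' : Finset (List W), IsOCDC H D' ∧ D'.card = D.card := by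
  classical
  set g := Function.invFun f
  have hfg : ∀ l ∈ D, (l.map g).map f = l := fun l hl => by
    rw [List.map_map]
    exact (List.map_congr_left fun v hv => Function.invFun_eq (hD l hl v hv)).trans (List.map_id l)
  refine ⟨D.image (List.map g), ⟨?_, fun a b hab => ?_⟩,
    card_image_of_injOn fun l₁ h₁ l₂ h₂ h => by rw [← hfg l₁ h₁, ← hfg l₂ h₂, h]⟩
  · simp only [mem_image]
    rintro _ ⟨l, hl, rfl⟩
    rw [← isDirCycle_map_iff f, hfg l hl]
    exact hC.1 l (hDC hl)
  · obtain ⟨l, ⟨hl, harc⟩, huniq⟩ := hC.2 _ _ (f.map_adj_iff.mpr hab)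
    have hlD := hcov l hl a b harc
    refine ⟨l.map g, ⟨mem_image_of_mem _ hlD, ?_⟩, ?_⟩
    · rwa [← mem_cycleArcs_map_iff f.injective, hfg l hlD]
    · rintro _ ⟨hm, hmarc⟩
      obtain ⟨m, hmD, rfl⟩ := mem_image.mp hm
      rw [← mem_cycleArcs_map_iff f.injective, hfg m hmD] at hmarc
      rw [huniq m ⟨hDC hmD, hmarc⟩]

end IsOCDC

end OCDC

section CompleteGraphFour

open Finset

set_option synthInstance.maxSize 1000 in
theorem swap_mem_cycleArcs_of_disjoint_fin_four :
    ∀ a ∈ (List.finRange 4).permutations', ∀ b ∈ (List.finRange 4).permutations',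
      (∀ p ∈ cycleArcs a, p ∉ cycleArcs b) → ∀ p ∈ cycleArcs a, p.swap ∈ cycleArcs b := by
  decide

lemma mem_permutations'_finRange_four {l : List (Fin 4)} (hl : l.Nodup) (hlen : l.length = 4) :
    l ∈ (List.finRange 4).permutations' := by
  have huniv : l.toFinset = univ :=
    eq_univ_of_card _ (by rw [List.toFinset_card_of_nodup hl, hlen, Fintype.card_fin])
  refine List.mem_permutations'.mpr
    ((List.perm_ext_iff_of_nodup hl (List.nodup_finRange 4)).mpr fun v => ?_)
  simp [← List.mem_toFinset, huniv]

lemma not_disjoint_cycleArcs_fin_four {a b c : List (Fin 4)}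
    (ha : a ∈ (List.finRange 4).permutations') (hb : b ∈ (List.finRange 4).permutations')
    (hc : c ∈ (List.finRange 4).permutations') (hab : (cycleArcs a).Disjoint (cycleArcs b))
    (hac : (cycleArcs a).Disjoint (cycleArcs c)) : ¬ (cycleArcs b).Disjoint (cycleArcs c) := by
  obtain ⟨p, hp⟩ := List.exists_mem_of_length_pos (l := cycleArcs a)
    (by simp [length_cycleArcs, (List.mem_permutations'.mp ha).length_eq])
  exact fun hbc => hbc (swap_mem_cycleArcs_of_disjoint_fin_four a ha b hb (fun q hq => hab hq) p hp)
    (swap_mem_cycleArcs_of_disjoint_fin_four a ha c hc (fun q hq => hac hq) p hp)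

theorem card_eq_four_of_isOCDC_top {C : Finset (List (Fin 4))} (hC : IsOCDC ⊤ C) : C.card = 4 := by
  have hsum : ∑ l ∈ C, l.length = 12 := by
    rw [hC.sum_length, dart_card_eq_twice_card_edges, card_edgeFinset_top_eq_card_choose_two]
    rfl
  have hle : ∀ l ∈ C, l.length ≤ 4 := fun l hl =>
    (hC.1 l hl).2.1.length_le_card.trans_eq (Fintype.card_fin 4)
  have h3 : C.card * 3 ≤ 12 := hsum ▸ card_nsmul_le_sum C _ 3 fun l hl => (hC.1 l hl).1
  have h4 : 12 ≤ C.card * 4 := hsum ▸ sum_le_card_nsmul C _ 4 hle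
  by_contra hne
  obtain ⟨a, b, c, hab, hac, hbc, rfl⟩ := card_eq_three.mp (show C.card = 3 by omega)
  have ha : a ∈ ({a, b, c} : Finset _) := by simp
  have hb : b ∈ ({a, b, c} : Finset _) := by simp
  have hc : c ∈ ({a, b, c} : Finset _) := by simp
  rw [sum_insert (by simp [hab, hac]), sum_insert (by simp [hbc]), sum_singleton] at hsum
  have := hle a ha
  have := hle b hb
  have := hle c hc
  exact not_disjoint_cycleArcs_fin_four
    (mem_permutations'_finRange_four (hC.1 a ha).2.1 (by omega))
    (mem_permutations'_finRange_four (hC.1 b hb).2.1 (by omega))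
    (mem_permutations'_finRange_four (hC.1 c hc).2.1 (by omega))
    (hC.disjoint_cycleArcs ha hb hab) (hC.disjoint_cycleArcs ha hc hac)
    (hC.disjoint_cycleArcs hb hc hbc)

end CompleteGraphFour

lemma SimpleGraph.not_isBridge_of_adj_of_adj {V : Type*} {G : SimpleGraph V} {u v w : V}
    (huw : G.Adj u w) (hwv : G.Adj w v) : ¬ G.IsBridge s(u, v) := by
  rw [isBridge_iff, not_not]
  have huw' : (G.deleteEdges {s(u, v)}).Adj u w := by simp [huw, huw.ne', hwv.ne]
  have hwv' : (G.deleteEdges {s(u, v)}).Adj w v := by simp [hwv, huw.ne', hwv.ne]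
  exact huw'.reachable.trans hwv'.reachable

namespace chainOfK4

open Finset

variable {r : ℕ} {u v x : Fin (r + 1) ⊕ Fin r × Fin 2}

/-- The position along the chain: `vⱼ` sits at `2j` and the private vertices of block `i` at
`2i + 1`, so that block `i` is the window `[2i, 2i + 2]`. -/
def pos : Fin (r + 1) ⊕ Fin r × Fin 2 → ℕ
  | Sum.inl j => 2 * j
  | Sum.inr p => 2 * p.1 + 1

lemma inBlockK4_iff_pos {i : Fin r} :
    inBlockK4 r i v ↔ 2 * (i : ℕ) ≤ pos v ∧ pos v ≤ 2 * i + 2 := by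
  cases v with
  | inl j => simp only [inBlockK4, pos, Fin.ext_iff, Fin.val_castSucc, Fin.val_succ]; omega
  | inr p => simp only [inBlockK4, pos, Fin.ext_iff]; omega

lemma eq_of_pos_eq (h : pos u = pos v) (heven : pos u % 2 = 0) : u = v := by
  cases u <;> cases v <;> simp only [pos] at h heven <;> first | omega | simp [Fin.ext_iff]; omega

lemma pos_ne_of_ne_inl {j : Fin (r + 1)} (hx : x ≠ Sum.inl j) : pos x ≠ 2 * j :=
  fun h => hx (eq_of_pos_eq (v := Sum.inl j) h (by omega))

lemma pos_lt_iff_of_adj (huv : (chainOfK4 r).Adj u v) {j : Fin (r + 1)} (hu : u ≠ Sum.inl j)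
    (hv : v ≠ Sum.inl j) : pos u < 2 * j ↔ pos v < 2 * j := by
  obtain ⟨-, i, hui, hvi⟩ := huv
  rw [inBlockK4_iff_pos] at hui hvi
  have := pos_ne_of_ne_inl hu
  have := pos_ne_of_ne_inl hv
  omega

lemma eq_of_inBlockK4_of_inBlockK4 {i i' : Fin r} (huv : u ≠ v) (hu : inBlockK4 r i u)
    (hu' : inBlockK4 r i' u) (hv : inBlockK4 r i v) (hv' : inBlockK4 r i' v) : i = i' := by
  rw [inBlockK4_iff_pos] at hu hu' hv hv'
  by_contra hii
  have hii' : (i : ℕ) ≠ i' := Fin.val_ne_of_ne hii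
  exact huv (eq_of_pos_eq (by omega) (by omega))

lemma forall_mem_inBlockK4 {l : List (Fin (r + 1) ⊕ Fin r × Fin 2)}
    (hl : IsDirCycle (chainOfK4 r) l) (huv : (u, v) ∈ cycleArcs l) {i : Fin r}
    (hu : inBlockK4 r i u) (hv : inBlockK4 r i v) : ∀ w ∈ l, inBlockK4 r i w := by
  intro w hw
  have hne : u ≠ v := (hl.2.2 _ huv).ne
  obtain ⟨hul, hvl⟩ := mem_of_mem_cycleArcs huv
  rw [inBlockK4_iff_pos] at hu hv ⊢
  have hcut : ∀ j : Fin (r + 1), w ≠ Sum.inl j → ∃ x ∈ l, x ≠ Sum.inl j ∧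
      2 * (i : ℕ) ≤ pos x ∧ pos x ≤ 2 * i + 2 ∧ (pos w < 2 * j ↔ pos x < 2 * j) := by
    intro j hwj
    obtain ⟨x, hx, hxj, hxi⟩ :
        ∃ x ∈ l, x ≠ Sum.inl j ∧ 2 * (i : ℕ) ≤ pos x ∧ pos x ≤ 2 * i + 2 := by
      by_cases huj : u = Sum.inl j
      · exact ⟨v, hvl, fun h => hne (huj.trans h.symm), hv⟩
      · exact ⟨u, hul, huj, hu⟩
    exact ⟨x, hx, hxj, hxi.1, hxi.2,
      hl.iff_of_ne_of_ne (fun a b hab => pos_lt_iff_of_adj hab) hw hx hwj hxj⟩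
  -- a vertex left of block `i` is cut off from `u` or `v` by `vᵢ`, one right of it by `vᵢ₊₁`
  constructor
  · by_contra! hw_lt
    obtain ⟨x, -, hx, hxi, -, hwx⟩ := hcut i.castSucc fun h => by simp [h, pos] at hw_lt
    have := pos_ne_of_ne_inl hx
    simp only [Fin.val_castSucc] at hwx this
    omega
  · by_contra! hw_gt
    obtain ⟨x, -, hx, -, hxi, hwx⟩ := hcut i.succ fun h => by simp [h, pos] at hw_gt; omega
    have := pos_ne_of_ne_inl hx
    simp only [Fin.val_succ] at hwx this
    omega

def blockVertex (i : Fin r) : Fin 4 → Fin (r + 1) ⊕ Fin r × Fin 2 :=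
  ![Sum.inl i.castSucc, Sum.inl i.succ, Sum.inr (i, 0), Sum.inr (i, 1)]

lemma inBlockK4_blockVertex (i : Fin r) (a : Fin 4) : inBlockK4 r i (blockVertex i a) := by
  fin_cases a <;> simp [blockVertex, inBlockK4]

lemma blockVertex_injective (i : Fin r) : (blockVertex i).Injective := by
  intro a b h
  fin_cases a <;> fin_cases b <;> simp_all [blockVertex, Fin.ext_iff]

def blockEmb (i : Fin r) : (⊤ : SimpleGraph (Fin 4)) ↪g chainOfK4 r where
  toFun := blockVertex i
  inj' := blockVertex_injective i
  map_rel_iff' {a b} :=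
    ⟨fun h hab => h.1 (congrArg _ hab), fun hab =>
      ⟨(blockVertex_injective i).ne hab, i, inBlockK4_blockVertex i a, inBlockK4_blockVertex i b⟩⟩

lemma mem_range_blockEmb {i : Fin r} :
    v ∈ Set.range (blockEmb i) ↔ inBlockK4 r i v := by
  constructor
  · rintro ⟨a, rfl⟩
    exact inBlockK4_blockVertex i a
  · rcases v with j | ⟨k, b⟩
    · rintro (rfl | rfl)
      exacts [⟨0, rfl⟩, ⟨1, rfl⟩]
    · rintro (rfl : k = i)
      fin_cases b
      exacts [⟨2, rfl⟩, ⟨3, rfl⟩]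

lemma exists_adj_adj (huv : (chainOfK4 r).Adj u v) :
    ∃ w, (chainOfK4 r).Adj u w ∧ (chainOfK4 r).Adj w v := by
  obtain ⟨-, i, hu, hv⟩ := huv
  obtain ⟨a, rfl⟩ := mem_range_blockEmb.mpr hu
  obtain ⟨b, rfl⟩ := mem_range_blockEmb.mpr hv
  have hthird : ∀ a b : Fin 4, ∃ c, c ≠ a ∧ c ≠ b := by decide
  obtain ⟨c, hca, hcb⟩ := hthird a b
  exact ⟨blockEmb i c, (blockEmb i).map_adj_iff.mpr hca.symm, (blockEmb i).map_adj_iff.mpr hcb⟩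

theorem card_eq_of_isOCDC {C : Finset (List (Fin (r + 1) ⊕ Fin r × Fin 2))}
    (hC : IsOCDC (chainOfK4 r) C) : C.card = 4 * r := by
  classical
  set D : Fin r → Finset (List (Fin (r + 1) ⊕ Fin r × Fin 2)) :=
    fun i => C.filter fun l => ∀ v ∈ l, inBlockK4 r i v
  have hblock : ∀ l ∈ C, ∃ i, ∀ v ∈ l, inBlockK4 r i v := fun l hl => by
    obtain ⟨⟨u, v⟩, huv⟩ := (hC.1 l hl).exists_mem_cycleArcs
    obtain ⟨-, i, hu, hv⟩ := (hC.1 l hl).2.2 _ huv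
    exact ⟨i, forall_mem_inBlockK4 (hC.1 l hl) huv hu hv⟩
  have hC_eq : C = univ.biUnion D := by
    ext l
    simp only [D, mem_biUnion, mem_univ, mem_filter, true_and]
    exact ⟨fun hl => (hblock l hl).imp fun _ h => ⟨hl, h⟩, fun ⟨_, hl, _⟩ => hl⟩
  have hdisj : ((univ : Finset (Fin r)) : Set (Fin r)).PairwiseDisjoint D := by
    intro i _ j _ hij
    refine disjoint_filter.mpr fun l hl hi hj => hij ?_
    obtain ⟨⟨u, v⟩, huv⟩ := (hC.1 l hl).exists_mem_cycleArcs
    obtain ⟨hu, hv⟩ := mem_of_mem_cycleArcs huv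
    exact eq_of_inBlockK4_of_inBlockK4 ((hC.1 l hl).2.2 _ huv).ne (hi u hu) (hj u hu) (hi v hv)
      (hj v hv)
  have hD : ∀ i, (D i).card = 4 := fun i => by
    obtain ⟨D', hD', hcard⟩ := hC.exists_comap (blockEmb i) (D := D i) (filter_subset _ _)
      (fun l hl v hv => mem_range_blockEmb.mpr ((mem_filter.mp hl).2 v hv))
      (fun l hl a b hab => mem_filter.mpr ⟨hl, forall_mem_inBlockK4 (hC.1 l hl) hab
        (inBlockK4_blockVertex i a) (inBlockK4_blockVertex i b)⟩)
    rw [← hcard, card_eq_four_of_isOCDC_top hD']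
  rw [hC_eq, card_biUnion hdisj, sum_congr rfl fun i _ => hD i, sum_const,
    card_univ, Fintype.card_fin, smul_eq_mul, mul_comm]

end chainOfK4

theorem exists_graph_every_OCDC_large_general (r : ℕ) :
    (∀ e ∈ (chainOfK4 r).edgeSet, ¬ (chainOfK4 r).IsBridge e) ∧
    Nat.card (Fin (r + 1) ⊕ Fin r × Fin 2) = 3 * r + 1 ∧
    ∀ C : Finset (List (Fin (r + 1) ⊕ Fin r × Fin 2)),
      IsOCDC (chainOfK4 r) C → C.card = 4 * r := by
  refine ⟨fun e he => ?_, ?_, fun C hC => chainOfK4.card_eq_of_isOCDC hC⟩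
  · induction e with
    | h u v =>
      obtain ⟨w, huw, hwv⟩ := chainOfK4.exists_adj_adj he
      exact not_isBridge_of_adj_of_adj huw hwv
  · simp only [Nat.card_eq_fintype_card, Fintype.card_sum, Fintype.card_prod, Fintype.card_fin]
    ring

/-- For every `r ≥ 1` there is a bridgeless graph of order `n = 3r + 1`, namely the
chain of `r` copies of `K₄` glued along a path, each of whose OCDCs consists of
exactly `4r = (n - 1) + r` directed cycles. -/
theorem exists_graph_every_OCDC_large (r : ℕ) (hr : 1 ≤ r) :
    (∀ e ∈ (chainOfK4 r).edgeSet, ¬ (chainOfK4 r).IsBridge e) ∧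
    Nat.card (Fin (r + 1) ⊕ Fin r × Fin 2) = 3 * r + 1 ∧
    ∀ C : Finset (List (Fin (r + 1) ⊕ Fin r × Fin 2)),
      IsOCDC (chainOfK4 r) C → C.card = 4 * r :=
  exists_graph_every_OCDC_large_general r
end

section
/- Every cubic (3-regular) simple graph whose edge chromatic number equals 3 admits an OCDC. -/
open SimpleGraph

/-!
Fix a proper 3-edge-colouring. For each colour `k`, the edges of the two other colours form a
2-factor whose cycles alternate between two colours, hence are even; let `r v k` be a 2-colouring
of it. At each vertex `v`, a walk arriving along colour `i` leaves along colour `i + 1` or `i - 1`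
according to the parity of `r v 0 + r v 1 + r v 2`; the faces are the orbits of the resulting
permutation of the darts, so every arc lies on exactly one face. A face never revisits a vertex:
the label `faceLabel (r v) i` in `(ZMod 2)²` of a dart leaving `v` with colour `i` is constant
along faces and separates the three darts leaving `v`.
-/

open Function

theorem exists_add_one_of_involutive {α : Type*} {e : α → α} (he : Involutive e)
    (hne : ∀ x, e x ≠ x) : ∃ s : α → ZMod 2, ∀ x, s (e x) = s x + 1 := by
  classical
  let : LinearOrder α := IsWellOrder.linearOrder WellOrderingRel
  refine ⟨fun x => if x < e x then 0 else 1, fun x => ?_⟩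
  rcases (hne x).lt_or_gt with h | h
  · simp only [he x, h, h.not_gt, if_true, if_false]
    decide
  · simp [he x, h, h.not_gt]

namespace Equiv.Perm
variable {α : Type*}

section Involutions
variable {σ τ : Perm α}

theorem apply_zpow_mul_apply (hσ : Involutive σ) (hτ : Involutive τ) (n : ℤ) (x : α) :
    σ (((σ * τ) ^ n) x) = ((σ * τ) ^ (-n)) (σ x) := by
  have hconj : σ * (σ * τ) * σ⁻¹ = (σ * τ)⁻¹ := by
    ext y
    simp [inv_def, Involutive.symm_eq_self_of_involutive, hσ, hτ, hσ _]
  rw [← mul_apply, ← mul_apply, zpow_neg, ← inv_zpow, ← hconj, conj_zpow]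
  simp

theorem not_sameCycle_mul_apply (hσ : Involutive σ) (hτ : Involutive τ)
    (hσx : ∀ x, σ x ≠ x) (hτx : ∀ x, τ x ≠ x) (x : α) : ¬ (σ * τ).SameCycle x (σ x) := by
  rintro ⟨k, hk⟩
  obtain ⟨m, rfl | rfl⟩ := k.even_or_odd'
  · apply hσx (((σ * τ) ^ m) x)
    rw [apply_zpow_mul_apply hσ hτ, ← hk, ← mul_apply, ← zpow_add]
    congr 2; ring
  · apply hτx (((σ * τ) ^ m) x)
    have hτσ : ∀ y, τ y = σ ((σ * τ) y) := fun y => by simp [hσ _]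
    rw [hτσ, ← mul_apply (σ * τ), ← zpow_one_add, apply_zpow_mul_apply hσ hτ, ← hk,
      ← mul_apply, ← zpow_add]
    congr 2; ring

theorem sameCycle_mul_apply_apply (hσ : Involutive σ) (hτ : Involutive τ) {x y : α}
    (h : (σ * τ).SameCycle x y) : (σ * τ).SameCycle (σ x) (σ y) := by
  obtain ⟨k, rfl⟩ := h
  exact ⟨-k, (apply_zpow_mul_apply hσ hτ k x).symm⟩

end Involutions

theorem SameCycle.apply_eq_of_invariant {β : Type*} [Finite α] {f : Perm α} {L : α → β}
    (hL : ∀ x, L (f x) = L x) {x y : α} (h : f.SameCycle x y) : L x = L y := by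
  obtain ⟨n, -, rfl⟩ := h.exists_pow_eq'
  rw [coe_pow]
  exact (congrFun (iterate_invariant (funext hL) n) x).symm

theorem rotate_one_toList [Fintype α] [DecidableEq α] (f : Perm α) (x : α) :
    (f.toList x).rotate 1 = (f.toList x).map f := by
  refine List.ext_getElem (by simp) fun n h₁ h₂ => ?_
  rw [List.getElem_rotate, List.getElem_map, getElem_toList, getElem_toList, ← mul_apply,
    ← pow_succ', length_toList, pow_mod_card_support_cycleOf_self_apply]

end Equiv.Perm

theorem exists_add_one_of_two_involutive {α : Type*} {σ τ : α → α} (hσ : Involutive σ)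
    (hτ : Involutive τ) (hσx : ∀ x, σ x ≠ x) (hτx : ∀ x, τ x ≠ x) :
    ∃ r : α → ZMod 2, ∀ x, r (σ x) = r x + 1 ∧ r (τ x) = r x + 1 := by
  set ρ := hσ.toPerm σ * hτ.toPerm τ
  -- `σ` pairs off the cycles of `ρ = σ τ`; `r` takes the value `0` on one cycle of each pair.
  let e : Quotient (Equiv.Perm.SameCycle.setoid ρ) → Quotient (Equiv.Perm.SameCycle.setoid ρ) :=
    Quotient.map σ fun x y => Equiv.Perm.sameCycle_mul_apply_apply hσ hτ
  have he : Involutive e := by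
    rintro ⟨x⟩
    exact congrArg (⟦·⟧) (hσ x)
  have hne : ∀ q, e q ≠ q := by
    rintro ⟨x⟩ h
    exact Equiv.Perm.not_sameCycle_mul_apply hσ hτ hσx hτx x (Quotient.exact h).symm
  obtain ⟨s, hs⟩ := exists_add_one_of_involutive he hne
  refine ⟨fun x => s ⟦x⟧, fun x => ⟨hs ⟦x⟧, ?_⟩⟩
  have hτσ : τ x = σ (ρ x) := by simp [ρ, hσ _]
  rw [hτσ]
  refine (hs ⟦ρ x⟧).trans ?_
  rw [Quotient.sound (Equiv.Perm.sameCycle_apply_left.2 Equiv.Perm.SameCycle.rfl)]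

namespace SimpleGraph
variable {V : Type*} {G : SimpleGraph V}

section Faces
variable [Fintype G.Dart] [DecidableEq V] {f : Equiv.Perm G.Dart}

def face (f : Equiv.Perm G.Dart) (d : G.Dart) : List V := (f.toList d).map (·.fst)

theorem cycleArcs_face (hf : ∀ d, (f d).fst = d.snd) (d : G.Dart) :
    cycleArcs (face f d) = (f.toList d).map (·.toProd) := by
  simp only [cycleArcs, face, ← List.map_rotate, Equiv.Perm.rotate_one_toList, List.map_map,
    List.zip_map']
  simp [hf]

theorem mem_cycleArcs_face (hf : ∀ d, (f d).fst = d.snd) {d : G.Dart} {p : V × V} :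
    p ∈ cycleArcs (face f d) ↔ ∃ e : G.Dart, e.toProd = p ∧ f.SameCycle d e := by
  have hd : d ∈ f.support := Equiv.Perm.mem_support.2 fun h => d.fst_ne_snd (by rw [← hf, h])
  simp [cycleArcs_face hf, Equiv.Perm.mem_toList_iff, hd, and_comm]

theorem isDirCycle_face (hf : ∀ d, (f d).fst = d.snd) (hback : ∀ d, (f d).snd ≠ d.fst)
    (hsame : ∀ d e, f.SameCycle d e → d.fst = e.fst → d = e) (d : G.Dart) :
    IsDirCycle G (face f d) := by
  have hmoves : ∀ e, f e ≠ e := fun e h => e.fst_ne_snd (by rw [← hf, h])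
  have hd : d ∈ f.support := Equiv.Perm.mem_support.2 (hmoves d)
  refine ⟨?_, ?_, fun p hp => ?_⟩
  · suffices 2 < (f.cycleOf d).support.card by simpa [face, Equiv.Perm.length_toList]
    have hmem : ∀ n : ℕ, (f ^ n) d ∈ (f.cycleOf d).support := fun n =>
      Equiv.Perm.mem_support_cycleOf_iff.2 ⟨⟨n, by simp⟩, hd⟩
    refine Finset.two_lt_card.2 ⟨d, hmem 0, f d, hmem 1, f (f d), hmem 2, (hmoves d).symm,
      fun h => hback d ?_, (hmoves (f d)).symm⟩
    rw [← hf (f d), ← h]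
  · refine (f.nodup_toList d).map_on fun a ha b hb hab => hsame a b ?_ hab
    rw [Equiv.Perm.mem_toList_iff] at ha hb
    exact ha.1.symm.trans hb.1
  · obtain ⟨e, rfl, -⟩ := (mem_cycleArcs_face hf).1 hp
    exact e.adj

end Faces

theorem exists_isOCDC_of_perm [Finite V] (f : Equiv.Perm G.Dart)
    (hf : ∀ d, (f d).fst = d.snd) (hback : ∀ d, (f d).snd ≠ d.fst)
    (hsame : ∀ d e, f.SameCycle d e → d.fst = e.fst → d = e) : ∃ C, IsOCDC G C := by
  classical
  have := Fintype.ofFinite V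
  refine ⟨Finset.univ.image fun q : Quotient (Equiv.Perm.SameCycle.setoid f) => face f q.out,
    ?_, fun u v huv => ?_⟩
  · intro l hl
    obtain ⟨q, -, rfl⟩ := Finset.mem_image.1 hl
    exact isDirCycle_face hf hback hsame _
  · let e : G.Dart := ⟨(u, v), huv⟩
    refine ⟨face f (⟦e⟧ : Quotient (Equiv.Perm.SameCycle.setoid f)).out,
      ⟨Finset.mem_image_of_mem _ (Finset.mem_univ _), (mem_cycleArcs_face hf).2
        ⟨e, rfl, Quotient.mk_out (s := Equiv.Perm.SameCycle.setoid f) e⟩⟩, ?_⟩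
    rintro l ⟨hl, he⟩
    obtain ⟨q, -, rfl⟩ := Finset.mem_image.1 hl
    obtain ⟨e', he', hq⟩ := (mem_cycleArcs_face hf).1 he
    obtain rfl : e' = e := Dart.ext _ _ he'
    rw [← Quotient.out_eq q, Quotient.sound hq]

section Coloring
variable {α : Type*} (col : G.lineGraph.Coloring α)

def dartColor (d : G.Dart) : α := col ⟨d.edge, d.edge_mem⟩

theorem dartColor_symm (d : G.Dart) : dartColor col d.symm = dartColor col d := by
  simp only [dartColor, Dart.edge_symm]

theorem eq_of_fst_eq_of_dartColor_eq {d e : G.Dart} (hfst : d.fst = e.fst)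
    (hcol : dartColor col d = dartColor col e) : d = e := by
  by_contra hne
  refine col.valid (lineGraph_adj_iff_exists.2 ⟨fun h => hne ?_, d.fst, Sym2.mem_mk_left _ _,
    hfst ▸ Sym2.mem_mk_left _ _⟩) hcol
  rcases (dart_edge_eq_iff d e).1 (congrArg Subtype.val h) with h | rfl
  · exact h
  · exact absurd hfst e.snd_ne_fst

theorem exists_fst_eq_dartColor_eq [Finite α] (hdeg : ∀ v, (G.neighborSet v).ncard = Nat.card α)
    (v : V) (i : α) : ∃ d : G.Dart, d.fst = v ∧ dartColor col d = i := by
  have hinj : Injective fun w => dartColor col (G.dartOfNeighborSet v w) := fun w w' h =>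
    G.dartOfNeighborSet_injective v (eq_of_fst_eq_of_dartColor_eq col rfl h)
  obtain ⟨w, hw⟩ := (hinj.bijective_of_nat_card_le (by rw [Nat.card_coe_set_eq, hdeg])).2 i
  exact ⟨_, rfl, hw⟩

end Coloring

section CubicColoring

def colorWeight : Fin 3 → ZMod 2 × ZMod 2 := ![(1, 0), (0, 1), (1, 1)]

def turn (x : Fin 3 → ZMod 2) (i : Fin 3) : Fin 3 :=
  if x 0 + x 1 + x 2 = 0 then i + 1 else i - 1

/-- Identifying `ZMod 2 × ZMod 2` with `𝔽₄` so that `colorWeight i = ω ^ i`, this is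
`ω ^ j * x k + ω ^ k * x j + (1 + ⋯ + ω ^ (i - 1))` for `{i, j, k} = {0, 1, 2}`. -/
def faceLabel (x : Fin 3 → ZMod 2) : Fin 3 → ZMod 2 × ZMod 2 :=
  ![(x 1, x 1 + x 2), (x 0 + x 2 + 1, x 0), (x 1 + 1, x 0 + 1)]

theorem turn_ne : ∀ x i, turn x i ≠ i := by decide

theorem turn_injective : ∀ x, Injective (turn x) := by decide

theorem faceLabel_injective : ∀ x, Injective (faceLabel x) := by decide

theorem faceLabel_turn : ∀ x i, faceLabel x (turn x i) = faceLabel x i + colorWeight i := by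
  decide

theorem faceLabel_of_flip : ∀ x y i, (∀ k, k ≠ i → y k = x k + 1) →
    faceLabel y i = faceLabel x i + colorWeight i := by
  decide

variable (col : G.lineGraph.Coloring (Fin 3))
  (hsurj : ∀ v i, ∃ d : G.Dart, d.fst = v ∧ dartColor col d = i)
include hsurj

theorem exists_bipartitions_of_two_factors : ∃ r : V → Fin 3 → ZMod 2,
    ∀ d k, k ≠ dartColor col d → r d.snd k = r d.fst k + 1 := by
  choose out hout_fst hout_col using hsurj
  have hout : ∀ d, out d.fst (dartColor col d) = d := fun d =>
    eq_of_fst_eq_of_dartColor_eq col (hout_fst _ _) (hout_col _ _)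
  have hσ : ∀ i, Involutive fun v => (out v i).snd := fun i v => by
    have : out (out v i).snd i = (out v i).symm := by
      simpa [dartColor_symm, hout_col] using hout (out v i).symm
    simp [this, hout_fst]
  have hσx : ∀ i v, (out v i).snd ≠ v := fun i v => by
    simpa [hout_fst] using (out v i).snd_ne_fst
  choose r hr using fun k : Fin 3 =>
    exists_add_one_of_two_involutive (hσ (k + 1)) (hσ (k + 2)) (hσx _) (hσx _)
  refine ⟨fun v k => r k v, fun d k hk => ?_⟩
  have hd : d.snd = (out d.fst (dartColor col d)).snd := by rw [hout]
  have hother : ∀ i k : Fin 3, i ≠ k → i = k + 1 ∨ i = k + 2 := by decide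
  rcases hother _ k (Ne.symm hk) with h | h
  · rw [hd, h]; exact (hr k d.fst).1
  · rw [hd, h]; exact (hr k d.fst).2

theorem exists_isOCDC_of_bipartitions [Finite V] (r : V → Fin 3 → ZMod 2)
    (hr : ∀ d k, k ≠ dartColor col d → r d.snd k = r d.fst k + 1) : ∃ C, IsOCDC G C := by
  classical
  have := Fintype.ofFinite V
  choose out hout_fst hout_col using hsurj
  let f₀ : G.Dart → G.Dart := fun d => out d.snd (turn (r d.snd) (dartColor col d))
  have hf₀_col : ∀ d, dartColor col (f₀ d) = turn (r d.snd) (dartColor col d) := fun d =>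
    hout_col _ _
  have hf₀ : Injective f₀ := fun d e h => by
    have hsnd : d.snd = e.snd := by
      rw [← hout_fst d.snd, ← hout_fst e.snd]
      exact congrArg (·.fst) h
    have hcol := hf₀_col d
    rw [h, hf₀_col, hsnd] at hcol
    refine Dart.symm_involutive.injective (eq_of_fst_eq_of_dartColor_eq col hsnd ?_)
    rw [dartColor_symm, dartColor_symm, turn_injective _ hcol]
  let f := Equiv.ofBijective f₀ (Finite.injective_iff_bijective.1 hf₀)
  have hf : ∀ d, (f d).fst = d.snd := fun d => hout_fst _ _
  let label : G.Dart → ZMod 2 × ZMod 2 := fun d => faceLabel (r d.fst) (dartColor col d)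
  have hlabel : ∀ d, label (f d) = label d := fun d => by
    simp only [label]
    rw [hf, show f d = f₀ d from rfl, hf₀_col, faceLabel_turn, faceLabel_of_flip _ _ _ (hr d),
      add_assoc, CharTwo.add_self_eq_zero, add_zero]
  refine exists_isOCDC_of_perm f hf (fun d h => turn_ne (r d.snd) (dartColor col d) ?_) ?_
  · have : f d = d.symm := Dart.ext _ _ (Prod.ext (hf d) h)
    rw [← hf₀_col, ← dartColor_symm col d]
    exact congrArg (dartColor col) this
  · intro d e hde hfst
    refine eq_of_fst_eq_of_dartColor_eq col hfst (faceLabel_injective (r d.fst) ?_)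
    simpa only [label, hfst] using hde.apply_eq_of_invariant hlabel

end CubicColoring

end SimpleGraph

/-- Every cubic graph whose edge chromatic number (the chromatic number of its line
graph) equals `3` admits an OCDC. -/
theorem exists_OCDC_of_cubic_chromatic_three {V : Type} [Finite V] (G : SimpleGraph V)
    (hcubic : ∀ v : V, (G.neighborSet v).ncard = 3)
    (hchi : G.lineGraph.chromaticNumber = 3) :
    ∃ C : Finset (List V), IsOCDC G C := by
  obtain ⟨col⟩ : G.lineGraph.Colorable 3 := chromaticNumber_le_iff_colorable.1 hchi.le
  have hsurj := exists_fst_eq_dartColor_eq col (by simpa using hcubic)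
  obtain ⟨r, hr⟩ := exists_bipartitions_of_two_factors col hsurj
  exact exists_isOCDC_of_bipartitions col hsurj r hr
end
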